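/- Let n ≥ 1, let A : [0,∞) → ℝ^{n×n} and w : ℝⁿ × [0,∞) → ℝⁿ be continuous, and let g : [0,∞) → [0,∞) be continuous with ‖w(x,t)‖₂ ≤ g(t) for all x ∈ ℝⁿ and t ≥ 0. Then every differentiable x : [0,∞) → ℝⁿ with x′(t) = A(t)x(t) + w(x(t), t) for all t ≥ 0 satisfies, for every t ≥ 0, ‖x(t)‖₂ ≤ ‖x(0)‖₂ · exp(∫₀^t μ₂[A(s)] ds) + ∫₀^t exp(∫_τ^t μ₂[A(s)] ds) · g(τ) dτ. -/

import Mathlib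

open Filter Matrix

lemma add_transpose_isHermitian {n : ℕ} (A : Matrix (Fin n) (Fin n) ℝ) :
    (A + Aᵀ).IsHermitian := by
  ext i j
  simp [Matrix.conjTranspose_apply, Matrix.transpose_apply, add_comm]

/-- The largest eigenvalue of a real symmetric matrix. -/
noncomputable def lambdaMax {n : ℕ} (M : Matrix (Fin n) (Fin n) ℝ) (hM : M.IsHermitian) : ℝ :=
  ⨆ i, hM.eigenvalues i

/-- The Euclidean logarithmic norm `μ₂[A] = (1/2)·λ_max(A + Aᵀ)`. -/
noncomputable def mu2 {n : ℕ} (A : Matrix (Fin n) (Fin n) ℝ) : ℝ :=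
  (1 / 2) * lambdaMax (A + Aᵀ) (add_transpose_isHermitian A)

/-!
Put `F(t) = ∫₀ᵗ μ₂[A(s)] ds`. Expanding in an eigenbasis of the symmetric part gives
`⟪A v, v⟫ ≤ μ₂[A] ‖v‖²`, so the rescaled curve `y = e^{-F} x` satisfies
`⟪y', y⟫ ≤ e^{-F} g ‖y‖`. Hence the right Dini derivative of `‖y‖` is at most `e^{-F} g`
(also where `y` vanishes, since there `‖w‖ ≤ g` bounds `‖y'‖`), and the fencing theorem gives
`‖y(t)‖ ≤ ‖y(0)‖ + ∫₀ᵗ e^{-F} g`; multiplying by `e^{F(t)}` is the claim. The integrals make sense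
because `μ₂` is continuous: `λ_max` is 1-Lipschitz for the operator norm.
-/

open Real Set Topology
open scoped InnerProductSpace

section LogarithmicNorm

variable {n : ℕ}

lemma Matrix.IsHermitian.toEuclideanLin_eigenvectorBasis {M : Matrix (Fin n) (Fin n) ℝ}
    (hM : M.IsHermitian) (i : Fin n) :
    toEuclideanLin M (hM.eigenvectorBasis i) = hM.eigenvalues i • hM.eigenvectorBasis i := by
  ext j
  simpa [toLpLin_apply] using congrFun (hM.mulVec_eigenvectorBasis i) j

lemma eigenvalues_le_lambdaMax {M : Matrix (Fin n) (Fin n) ℝ} (hM : M.IsHermitian) (i : Fin n) :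
    hM.eigenvalues i ≤ lambdaMax M hM :=
  le_ciSup (Set.finite_range _).bddAbove i

lemma real_inner_toEuclideanLin_le_lambdaMax {M : Matrix (Fin n) (Fin n) ℝ} (hM : M.IsHermitian)
    (v : EuclideanSpace ℝ (Fin n)) :
    ⟪toEuclideanLin M v, v⟫_ℝ ≤ lambdaMax M hM * ‖v‖ ^ 2 := by
  set b := hM.eigenvectorBasis
  have hcoord (i : Fin n) : ⟪toEuclideanLin M v, b i⟫_ℝ = hM.eigenvalues i * ⟪b i, v⟫_ℝ := by
    rw [(isSymmetric_toEuclideanLin_iff.mpr hM) v (b i), hM.toEuclideanLin_eigenvectorBasis,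
      real_inner_smul_right, real_inner_comm]
  calc ⟪toEuclideanLin M v, v⟫_ℝ = ∑ i, hM.eigenvalues i * ⟪b i, v⟫_ℝ ^ 2 := by
        rw [← b.sum_inner_mul_inner]
        exact Finset.sum_congr rfl fun i _ => by rw [hcoord]; ring
    _ ≤ ∑ i, lambdaMax M hM * ⟪b i, v⟫_ℝ ^ 2 := by
        gcongr with i
        exact eigenvalues_le_lambdaMax hM i
    _ = lambdaMax M hM * ‖v‖ ^ 2 := by
        rw [← Finset.mul_sum, ← real_inner_self_eq_norm_sq, ← b.sum_inner_mul_inner]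
        simp_rw [real_inner_comm v, sq]

lemma lambdaMax_le_add_norm_sub {M N : Matrix (Fin n) (Fin n) ℝ} (hM : M.IsHermitian)
    (hN : N.IsHermitian) :
    lambdaMax M hM ≤ lambdaMax N hN + ‖toEuclideanCLM (𝕜 := ℝ) (M - N)‖ := by
  cases isEmpty_or_nonempty (Fin n)
  · simp [lambdaMax]
  refine ciSup_le fun i => ?_
  set b := hM.eigenvectorBasis i
  have hb : ‖b‖ = 1 := hM.eigenvectorBasis.orthonormal.1 i
  calc hM.eigenvalues i = ⟪toEuclideanLin M b, b⟫_ℝ := by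
        rw [hM.toEuclideanLin_eigenvectorBasis, real_inner_smul_left, real_inner_self_eq_norm_sq,
          hb, one_pow, mul_one]
    _ = ⟪toEuclideanLin N b, b⟫_ℝ + ⟪toEuclideanCLM (𝕜 := ℝ) (M - N) b, b⟫_ℝ := by
        rw [← inner_add_left, map_sub]
        exact congrArg (⟪·, b⟫_ℝ) (add_sub_cancel _ _).symm
    _ ≤ lambdaMax N hN + ‖toEuclideanCLM (𝕜 := ℝ) (M - N)‖ := by
        gcongr
        · simpa [hb] using real_inner_toEuclideanLin_le_lambdaMax hN b
        · refine (real_inner_le_norm _ _).trans ?_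
          simpa [hb] using (toEuclideanCLM (𝕜 := ℝ) (M - N)).le_opNorm b

lemma abs_mu2_sub_le (M N : Matrix (Fin n) (Fin n) ℝ) :
    |mu2 M - mu2 N| ≤ ‖toEuclideanCLM (𝕜 := ℝ) (M + Mᵀ - (N + Nᵀ))‖ / 2 := by
  have hMN := lambdaMax_le_add_norm_sub (add_transpose_isHermitian M) (add_transpose_isHermitian N)
  have hNM := lambdaMax_le_add_norm_sub (add_transpose_isHermitian N) (add_transpose_isHermitian M)
  rw [map_sub, norm_sub_rev, ← map_sub] at hNM
  rw [abs_sub_le_iff, mu2, mu2]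
  constructor <;> linarith

lemma continuous_mu2 : Continuous (mu2 (n := n)) := by
  have hCLM : Continuous (toEuclideanCLM (n := Fin n) (𝕜 := ℝ)) :=
    LinearMap.continuous_of_finiteDimensional
      (toEuclideanCLM (n := Fin n) (𝕜 := ℝ)).toAlgEquiv.toLinearEquiv.toLinearMap
  refine continuous_iff_continuousAt.2 fun M => tendsto_iff_norm_sub_tendsto_zero.2 ?_
  have hbound : Continuous fun N : Matrix (Fin n) (Fin n) ℝ =>
      ‖toEuclideanCLM (𝕜 := ℝ) (N + Nᵀ - (M + Mᵀ))‖ / 2 := by fun_prop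
  refine squeeze_zero (fun _ => norm_nonneg _) (fun N => abs_mu2_sub_le N M) ?_
  simpa using hbound.tendsto M

lemma real_inner_toEuclideanLin_le_mu2 (M : Matrix (Fin n) (Fin n) ℝ)
    (v : EuclideanSpace ℝ (Fin n)) :
    ⟪toEuclideanLin M v, v⟫_ℝ ≤ mu2 M * ‖v‖ ^ 2 := by
  have htranspose : ⟪toEuclideanLin Mᵀ v, v⟫_ℝ = ⟪toEuclideanLin M v, v⟫_ℝ := by
    rw [← conjTranspose_eq_transpose_of_trivial, toEuclideanLin_conjTranspose_eq_adjoint,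
      LinearMap.adjoint_inner_left, real_inner_comm]
  have h := real_inner_toEuclideanLin_le_lambdaMax (add_transpose_isHermitian M) v
  rw [map_add, LinearMap.add_apply, inner_add_left, htranspose] at h
  rw [mu2]
  linarith

end LogarithmicNorm

lemma hasDerivWithinAt_integral_Ici {F : Type*} [NormedAddCommGroup F] [NormedSpace ℝ F]
    [CompleteSpace F] {f : ℝ → F} {a b t : ℝ} (hf : ContinuousOn f (Icc a b)) (ht : t ∈ Ico a b) :
    HasDerivWithinAt (fun u => ∫ s in a..u, f s) (f t) (Ici t) t := by
  have hnhds : Icc a b ∈ 𝓝[>] t := Icc_mem_nhdsGT_of_mem ht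
  exact intervalIntegral.integral_hasDerivWithinAt_right (t := Ioi t)
    ((hf.mono (Icc_subset_Icc_right ht.2.le)).intervalIntegrable_of_Icc ht.1)
    ((hf.stronglyMeasurableAtFilter_nhdsWithin measurableSet_Icc t).filter_mono
      (nhdsWithin_le_of_mem hnhds))
    ((hf t (Ico_subset_Icc_self ht)).mono_of_mem_nhdsWithin hnhds)

lemma ContinuousOn.continuousOn_primitive_Icc {F : Type*} [NormedAddCommGroup F]
    [NormedSpace ℝ F] {f : ℝ → F} {a b : ℝ} (hf : ContinuousOn f (Icc a b)) (hab : a ≤ b) :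
    ContinuousOn (fun u => ∫ s in a..u, f s) (Icc a b) := by
  simpa [uIcc_of_le hab] using
    intervalIntegral.continuousOn_primitive_interval' (hf.intervalIntegrable_of_Icc hab)
      left_mem_uIcc

section NormComparison

variable {E : Type*} [NormedAddCommGroup E] [InnerProductSpace ℝ E]

lemma frequently_slope_norm_lt {y : ℝ → E} {v : E} {t c r : ℝ}
    (hy : HasDerivWithinAt y v (Ici t) t) (hinner : ⟪v, y t⟫_ℝ ≤ c * ‖y t‖)
    (hzero : y t = 0 → ‖v‖ ≤ c) (hr : c < r) :
    ∃ᶠ z in 𝓝[>] t, slope (fun s => ‖y s‖) t z < r := by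
  by_cases h0 : y t = 0
  · have hslope : Tendsto (slope y t) (𝓝[>] t) (𝓝 v) :=
      (hasDerivWithinAt_iff_tendsto_slope' (lt_irrefl t)).1 hy.Ioi_of_Ici
    have hlt : ∀ᶠ z in 𝓝[>] t, ‖slope y t z‖ < r :=
      hslope.norm.eventually_lt_const ((hzero h0).trans_lt hr)
    refine (hlt.and self_mem_nhdsWithin).frequently.mono fun z ⟨hz, hzt⟩ => ?_
    have hzt' : 0 < z - t := sub_pos.2 hzt
    rw [slope_def_module, h0, sub_zero, norm_smul, norm_inv, Real.norm_of_nonneg hzt'.le,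
      ← div_eq_inv_mul] at hz
    rwa [slope_def_field, h0, norm_zero, sub_zero]
  · have hpos : 0 < ‖y t‖ := norm_pos_iff.2 h0
    have hnorm : HasDerivWithinAt (fun s => ‖y s‖) (⟪v, y t⟫_ℝ / ‖y t‖) (Ici t) t := by
      convert hy.norm_sq.sqrt (by positivity) using 1
      · simp only [sqrt_sq (norm_nonneg _)]
      · rw [sqrt_sq (norm_nonneg _), real_inner_comm]
        field_simp
    exact hnorm.liminf_right_slope_le (((div_le_iff₀ hpos).2 hinner).trans_lt hr)

theorem norm_le_norm_add_integral_of_inner_le {y v : ℝ → E} {h : ℝ → ℝ} {a b : ℝ} (hab : a ≤ b)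
    (hyc : ContinuousOn y (Icc a b)) (hy : ∀ t ∈ Ico a b, HasDerivWithinAt y (v t) (Ici t) t)
    (hh : ContinuousOn h (Icc a b)) (hinner : ∀ t ∈ Ico a b, ⟪v t, y t⟫_ℝ ≤ h t * ‖y t‖)
    (hzero : ∀ t ∈ Ico a b, y t = 0 → ‖v t‖ ≤ h t) :
    ‖y b‖ ≤ ‖y a‖ + ∫ s in a..b, h s :=
  image_le_of_liminf_slope_right_le_deriv_boundary (f := fun t => ‖y t‖) hyc.norm
    (by simp) (continuousOn_const.add (hh.continuousOn_primitive_Icc hab))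
    (fun t ht => (hasDerivWithinAt_integral_Ici hh ht).const_add _)
    (fun t ht _ hr => frequently_slope_norm_lt (hy t ht) (hinner t ht) (hzero t ht) hr)
    (right_mem_Icc.2 hab)

lemma real_inner_smul_sub_smul_le {v x : E} {c μ g : ℝ} (hc : 0 ≤ c)
    (h : ⟪v, x⟫_ℝ ≤ μ * ‖x‖ ^ 2 + g * ‖x‖) :
    ⟪c • (v - μ • x), c • x⟫_ℝ ≤ c * g * ‖c • x‖ := by
  simp only [real_inner_smul_left, real_inner_smul_right, inner_sub_left,
    real_inner_self_eq_norm_sq, norm_smul, norm_of_nonneg hc]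
  calc _ = c * c * (⟪v, x⟫_ℝ - μ * ‖x‖ ^ 2) := by ring
    _ ≤ c * c * (g * ‖x‖) := by gcongr; linarith
    _ = _ := by ring

theorem exp_neg_integral_mul_norm_le {x v : ℝ → E} {μ g : ℝ → ℝ} {a b : ℝ} (hab : a ≤ b)
    (hμ : ContinuousOn μ (Icc a b)) (hg : ContinuousOn g (Icc a b))
    (hxc : ContinuousOn x (Icc a b)) (hx : ∀ t ∈ Ico a b, HasDerivWithinAt x (v t) (Ici t) t)
    (hinner : ∀ t ∈ Ico a b, ⟪v t, x t⟫_ℝ ≤ μ t * ‖x t‖ ^ 2 + g t * ‖x t‖)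
    (hzero : ∀ t ∈ Ico a b, x t = 0 → ‖v t‖ ≤ g t) :
    exp (-∫ s in a..b, μ s) * ‖x b‖ ≤
      ‖x a‖ + ∫ τ in a..b, exp (-∫ s in a..τ, μ s) * g τ := by
  set F : ℝ → ℝ := fun t => ∫ s in a..t, μ s
  have hF (t : ℝ) (ht : t ∈ Ico a b) : HasDerivWithinAt F (μ t) (Ici t) t :=
    hasDerivWithinAt_integral_Ici hμ ht
  have hFc : ContinuousOn F (Icc a b) := hμ.continuousOn_primitive_Icc hab
  have hscaled := norm_le_norm_add_integral_of_inner_le (y := fun t => exp (-F t) • x t)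
    (v := fun t => exp (-F t) • (v t - μ t • x t)) (h := fun t => exp (-F t) * g t) hab
    (hFc.neg.rexp.smul hxc)
    (fun t ht => by
      refine (((hF t ht).neg.exp).smul (hx t ht)).congr_deriv ?_
      simp only [Pi.neg_apply]
      module)
    (hFc.neg.rexp.mul hg)
    (fun t ht => real_inner_smul_sub_smul_le (exp_pos _).le (hinner t ht))
    (fun t ht h0 => by
      have hx0 : x t = 0 := (smul_eq_zero.1 h0).resolve_left (exp_ne_zero _)
      simpa [hx0, norm_smul] using mul_le_mul_of_nonneg_left (hzero t ht hx0) (exp_pos (-F t)).le)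
  have hFa : F a = 0 := intervalIntegral.integral_same
  rwa [hFa, neg_zero, exp_zero, one_smul, norm_smul, norm_of_nonneg (exp_pos _).le] at hscaled

theorem norm_le_of_inner_le_mul_norm_sq_add_mul_norm {x v : ℝ → E} {μ g : ℝ → ℝ} {a b : ℝ}
    (hab : a ≤ b) (hμ : ContinuousOn μ (Icc a b)) (hg : ContinuousOn g (Icc a b))
    (hxc : ContinuousOn x (Icc a b)) (hx : ∀ t ∈ Ico a b, HasDerivWithinAt x (v t) (Ici t) t)
    (hinner : ∀ t ∈ Ico a b, ⟪v t, x t⟫_ℝ ≤ μ t * ‖x t‖ ^ 2 + g t * ‖x t‖)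
    (hzero : ∀ t ∈ Ico a b, x t = 0 → ‖v t‖ ≤ g t) :
    ‖x b‖ ≤ ‖x a‖ * exp (∫ s in a..b, μ s) + ∫ τ in a..b, exp (∫ s in τ..b, μ s) * g τ := by
  set F : ℝ → ℝ := fun t => ∫ s in a..t, μ s
  have hscaled := exp_neg_integral_mul_norm_le hab hμ hg hxc hx hinner hzero
  have hFb (τ : ℝ) (hτ : τ ∈ uIcc a b) : ∫ s in τ..b, μ s = F b - F τ := by
    rw [uIcc_of_le hab] at hτ
    exact (intervalIntegral.integral_interval_sub_left (hμ.intervalIntegrable_of_Icc hab)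
      ((hμ.mono (Icc_subset_Icc_right hτ.2)).intervalIntegrable_of_Icc hτ.1)).symm
  calc ‖x b‖ = exp (F b) * (exp (-F b) * ‖x b‖) := by
        rw [← mul_assoc, ← exp_add, add_neg_cancel, exp_zero, one_mul]
    _ ≤ exp (F b) * (‖x a‖ + ∫ τ in a..b, exp (-F τ) * g τ) := by gcongr
    _ = ‖x a‖ * exp (F b) + ∫ τ in a..b, exp (F b) * (exp (-F τ) * g τ) := by
        rw [intervalIntegral.integral_const_mul]
        ring
    _ = _ := by
        refine congrArg _ (intervalIntegral.integral_congr fun τ hτ => ?_)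
        simp only [hFb τ hτ, sub_eq_add_neg, exp_add]
        ring

end NormComparison

theorem stmt_3_general (n : ℕ)
    (A : ℝ → Matrix (Fin n) (Fin n) ℝ)
    (hA : ContinuousOn A (Set.Ici (0 : ℝ)))
    (w : EuclideanSpace ℝ (Fin n) → ℝ → EuclideanSpace ℝ (Fin n))
    (g : ℝ → ℝ)
    (hg : ContinuousOn g (Set.Ici (0 : ℝ)))
    (hbound : ∀ (y : EuclideanSpace ℝ (Fin n)) (t : ℝ), 0 ≤ t → ‖w y t‖ ≤ g t)
    (x : ℝ → EuclideanSpace ℝ (Fin n))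
    (hx : ∀ t : ℝ, 0 ≤ t →
      HasDerivAt x (Matrix.toEuclideanLin (A t) (x t) + w (x t) t) t) :
    ∀ t : ℝ, 0 ≤ t →
      ‖x t‖ ≤ ‖x 0‖ * Real.exp (∫ s in (0:ℝ)..t, mu2 (A s)) +
        ∫ τ in (0:ℝ)..t, Real.exp (∫ s in τ..t, mu2 (A s)) * g τ := by
  intro T hT
  have hIcc : Icc 0 T ⊆ Ici 0 := Icc_subset_Ici_self
  refine norm_le_of_inner_le_mul_norm_sq_add_mul_norm hT
    ((continuous_mu2.comp_continuousOn hA).mono hIcc) (hg.mono hIcc)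
    (fun t ht => (hx t ht.1).continuousAt.continuousWithinAt)
    (fun t ht => (hx t ht.1).hasDerivWithinAt) (fun t ht => ?_) (fun t ht hx0 => ?_)
  · rw [inner_add_left]
    exact add_le_add (real_inner_toEuclideanLin_le_mu2 _ _) ((real_inner_le_norm _ _).trans
      (mul_le_mul_of_nonneg_right (hbound _ _ ht.1) (norm_nonneg _)))
  · simpa [hx0] using hbound _ _ ht.1

/-- variation-of-constants estimate in terms of the logarithmic norm
for the perturbed system `ẋ = A(t)x + w(x,t)` with `‖w(x,t)‖ ≤ g(t)`. -/
theorem stmt_3 (n : ℕ) (hn : 1 ≤ n)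
    (A : ℝ → Matrix (Fin n) (Fin n) ℝ)
    (hA : ContinuousOn A (Set.Ici (0 : ℝ)))
    (w : EuclideanSpace ℝ (Fin n) → ℝ → EuclideanSpace ℝ (Fin n))
    (hw : ContinuousOn (fun p : EuclideanSpace ℝ (Fin n) × ℝ => w p.1 p.2)
      (Set.univ ×ˢ Set.Ici (0 : ℝ)))
    (g : ℝ → ℝ)
    (hg : ContinuousOn g (Set.Ici (0 : ℝ)))
    (hg0 : ∀ t : ℝ, 0 ≤ t → 0 ≤ g t)
    (hbound : ∀ (y : EuclideanSpace ℝ (Fin n)) (t : ℝ), 0 ≤ t → ‖w y t‖ ≤ g t)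
    (x : ℝ → EuclideanSpace ℝ (Fin n))
    (hx : ∀ t : ℝ, 0 ≤ t →
      HasDerivAt x (Matrix.toEuclideanLin (A t) (x t) + w (x t) t) t) :
    ∀ t : ℝ, 0 ≤ t →
      ‖x t‖ ≤ ‖x 0‖ * Real.exp (∫ s in (0:ℝ)..t, mu2 (A s)) +
        ∫ τ in (0:ℝ)..t, Real.exp (∫ s in τ..t, mu2 (A s)) * g τ :=
  stmt_3_general n A hA w g hg hbound x hx
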